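/- arXiv:2511.12253 — 2 statements merged into one kernel-verified Lean document; each statement's English description precedes it below -/
import Mathlib

section
/- (Fold-Unfold-Inverse for Lists) Let g : β → Gen (Option (α × β)), f : α → β → β, and z : β. Suppose that for all b : β: (i) none ∈ ⟦g b⟧ ↔ b = z, and (ii) for all x : α and b' : β, some (x, b') ∈ ⟦g b⟧ ↔ b = f x b'. Then for every list xs : List α and every b : β, xs ∈ ⟦List.unfold g b⟧ ↔ List.fold f z xs = b. -/
namespace PBT

inductive Gen : Type → Type 1 where
  | pure {α : Type} : α → Gen α
  | pick {α : Type} : Gen α → Gen α → Gen α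
  | bind {α β : Type} : Gen α → (α → Gen β) → Gen β
  | indexed {α : Type} : (ℕ → Gen (Option α)) → Gen α
  | assume {α : Type} : (b : Bool) → (b = true → Gen α) → Gen α

instance : Pure Gen := ⟨Gen.pure⟩
instance : Bind Gen := ⟨Gen.bind⟩

def Gen.support : {α : Type} → Gen α → Set α
  | _, .pure a' => {a | a = a'}
  | _, .pick x y => {a | a ∈ x.support ∨ a ∈ y.support}
  | _, .bind x f => {a | ∃ a', a' ∈ x.support ∧ a ∈ (f a').support}
  | _, .indexed f => {a | (∃ n, some a ∈ (f n).support) ∧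
      (∀ a' n, some a' ∈ (f n).support → some a' ∈ (f (n + 1)).support)}
  | _, .assume b k => {a | ∃ h : b = true, a ∈ (k h).support}

notation (priority := high) "⟦" g "⟧" => Gen.support g

def listFold {α β : Type} (f : α → β → β) (z : β) : List α → β
  | [] => z
  | x :: xs => f x (listFold f z xs)

def listUnfold.go {α β : Type} (g : β → Gen (Option (α × β))) : β → ℕ → Gen (Option (List α))
  | _, 0 => .pure none
  | b, fuel + 1 =>
    g b >>= fun step =>
      match step with
      | none => .pure (some [])
      | some (x, b') =>
        listUnfold.go g b' fuel >>= fun mxs =>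
          match mxs with
          | none => .pure none
          | some xs => .pure (some (x :: xs))

def listUnfold {α β : Type} (g : β → Gen (Option (α × β))) (b : β) : Gen (List α) :=
  .indexed (listUnfold.go g b)

/-! The `n`-th approximation `listUnfold.go g b n` yields exactly the lists of length `< n` that
fold to `b`: by (i) and (ii), each step of the unfold inverts one step of the fold. These
approximations grow with `n`, so the monotonicity clause of `indexed` holds and the support of
`listUnfold g b` is their union. -/

namespace Gen

variable {α β : Type}

@[simp]
theorem mem_support_pure {a a' : α} : a ∈ ⟦(Gen.pure a' : Gen α)⟧ ↔ a = a' := Iff.rfl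

@[simp]
theorem mem_support_bind {x : Gen α} {k : α → Gen β} {b : β} :
    b ∈ ⟦x >>= k⟧ ↔ ∃ a ∈ ⟦x⟧, b ∈ ⟦k a⟧ := Iff.rfl

theorem mem_support_indexed_of_monotone {f : ℕ → Gen (Option α)}
    (hmono : ∀ a n, some a ∈ ⟦f n⟧ → some a ∈ ⟦f (n + 1)⟧) {a : α} :
    a ∈ ⟦indexed f⟧ ↔ ∃ n, some a ∈ ⟦f n⟧ :=
  and_iff_left hmono

end Gen

namespace listUnfold

variable {α β : Type} {g : β → Gen (Option (α × β))}

@[simp]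
theorem some_notMem_support_go_zero (b : β) (xs : List α) :
    some xs ∉ ⟦go g b 0⟧ := by
  simp [go]

@[simp]
theorem some_nil_mem_support_go_succ (b : β) (n : ℕ) :
    some [] ∈ ⟦go g b (n + 1)⟧ ↔ none ∈ ⟦g b⟧ := by
  simp [go, Option.exists]

@[simp]
theorem some_cons_mem_support_go_succ (b : β) (n : ℕ) (x : α) (xs : List α) :
    some (x :: xs) ∈ ⟦go g b (n + 1)⟧ ↔ ∃ b', some (x, b') ∈ ⟦g b⟧ ∧ some xs ∈ ⟦go g b' n⟧ := by
  simp [go, Option.exists, Prod.exists]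

variable {f : α → β → β} {z : β}

theorem some_mem_support_go_iff
    (hnone : ∀ b, none ∈ ⟦g b⟧ ↔ b = z)
    (hsome : ∀ b x b', some (x, b') ∈ ⟦g b⟧ ↔ b = f x b') (xs : List α) (b : β) (n : ℕ) :
    some xs ∈ ⟦go g b n⟧ ↔ listFold f z xs = b ∧ xs.length < n := by
  induction xs generalizing b n with
  | nil => cases n <;> simp [listFold, hnone, eq_comm]
  | cons x xs ih => cases n <;> simp [listFold, hsome, ih, eq_comm]

end listUnfold

theorem fold_unfold_inverse {α β : Type} (g : β → Gen (Option (α × β)))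
    (f : α → β → β) (z : β)
    (h1 : ∀ b : β, none ∈ ⟦g b⟧ ↔ b = z)
    (h2 : ∀ (b : β) (x : α) (b' : β), some (x, b') ∈ ⟦g b⟧ ↔ b = f x b') :
    ∀ (xs : List α) (b : β), xs ∈ ⟦listUnfold g b⟧ ↔ listFold f z xs = b := by
  intro xs b
  have hgo := listUnfold.some_mem_support_go_iff h1 h2
  rw [listUnfold, Gen.mem_support_indexed_of_monotone]
  · simp only [hgo]
    exact ⟨fun ⟨_, hfold, _⟩ => hfold, fun hfold => ⟨xs.length + 1, hfold, xs.length.lt_succ_self⟩⟩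
  · intro xs' n
    simp only [hgo]
    exact And.imp_right Nat.lt_succ_of_lt

end PBT
end

section
/- (Correctness of genSorted) For every list xs of natural numbers, xs ∈ ⟦genSorted⟧ if and only if xs is sorted in nondecreasing order (equivalently, List.Chain' (· ≤ ·) xs holds). -/
namespace PBT
def arbNat.go : ℕ → Gen (Option ℕ)
  | 0 => .pure none
  | fuel + 1 =>
    .pick (.pure (some 0))
      (arbNat.go fuel >>= fun on' =>
        match on' with
        | none => .pure none
        | some n' => .pure (some (1 + n')))

def arbNat : Gen ℕ := .indexed arbNat.go

def greaterThan (n : ℕ) : Gen ℕ := arbNat >>= fun lo => .pure (lo + 1 + n)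

def genSorted : Gen (List ℕ) :=
  listUnfold
    (fun lo =>
      .pick (.pure none)
        (Gen.pick (greaterThan lo) (.pure lo) >>= fun x => .pure (some (x, x))))
    0

lemma arbNat_mono (n : ℕ) (a : ℕ) (h : some a ∈ ⟦arbNat.go n⟧) :
    some a ∈ ⟦arbNat.go (n+1)⟧ := by
  induction n generalizing a with
  | zero => simp [arbNat.go, Gen.support] at h
  | succ n ih =>
    simp only [arbNat.go, Gen.support, Bind.bind, Set.mem_setOf_eq] at h ⊢
    rcases h with h | ⟨on', hon', ha⟩
    · exact Or.inl h
    · right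
      match on' with
      | none => simp [Gen.support] at ha
      | some k =>
        exact ⟨some k, ih k hon', ha⟩

lemma arbNat_complete (m : ℕ) : some m ∈ ⟦arbNat.go (m+1)⟧ := by
  induction m with
  | zero => simp [arbNat.go, Gen.support]
  | succ m ih =>
    simp only [arbNat.go, Gen.support, Bind.bind, Set.mem_setOf_eq]
    right
    exact ⟨some m, ih, by simp [Gen.support, Nat.add_comm]⟩

lemma arbNat_all (m : ℕ) : m ∈ ⟦arbNat⟧ := by
  refine ⟨⟨m+1, arbNat_complete m⟩, fun a' n h => arbNat_mono n a' h⟩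

lemma greaterThan_support (lo m : ℕ) : m ∈ ⟦greaterThan lo⟧ ↔ lo < m := by
  constructor
  · rintro ⟨k, _, hm⟩
    simp [Gen.support] at hm
    omega
  · intro h
    exact ⟨m - lo - 1, arbNat_all _, by simp [Gen.support]; omega⟩


def sg : ℕ → Gen (Option (ℕ × ℕ)) :=
  fun lo =>
    .pick (.pure none)
      (Gen.pick (greaterThan lo) (.pure lo) >>= fun x => .pure (some (x, x)))

lemma sg_support (lo : ℕ) (s : Option (ℕ × ℕ)) :
    s ∈ ⟦sg lo⟧ ↔ s = none ∨ ∃ x, lo ≤ x ∧ s = some (x, x) := by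
  simp only [sg, Gen.support, Bind.bind, Set.mem_setOf_eq]
  constructor
  · rintro (h | ⟨x, hx | hx, hs⟩)
    · exact Or.inl h
    · exact Or.inr ⟨x, le_of_lt ((greaterThan_support lo x).1 hx), hs⟩
    · exact Or.inr ⟨x, le_of_eq hx.symm, hs⟩
  · rintro (h | ⟨x, hx, hs⟩)
    · exact Or.inl h
    · rcases eq_or_lt_of_le hx with h | h
      · exact Or.inr ⟨x, Or.inr (by simp [Gen.support, h]), by simp [Gen.support, hs]⟩
      · exact Or.inr ⟨x, Or.inl ((greaterThan_support lo x).2 h), by simp [Gen.support, hs]⟩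

lemma go_some (fuel : ℕ) : ∀ (b : ℕ) (xs : List ℕ),
    some xs ∈ ⟦listUnfold.go sg b fuel⟧ ↔ xs.length < fuel ∧ List.Chain (· ≤ ·) b xs := by
  induction fuel with
  | zero => intro b xs; simp [listUnfold.go, Gen.support]
  | succ fuel ih =>
    intro b xs
    simp only [listUnfold.go, Gen.support, Bind.bind, Set.mem_setOf_eq]
    constructor
    · rintro ⟨step, hstep, hxs⟩
      rcases (sg_support b step).1 hstep with rfl | ⟨x, hx, rfl⟩
      · simp [Gen.support] at hxs
        subst hxs
        simp
        exact List.Chain.nil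
      · simp only [Gen.support, Set.mem_setOf_eq] at hxs
        rcases hxs with ⟨mxs, hmxs, hx2⟩
        match mxs with
        | none => simp [Gen.support] at hx2
        | some ys =>
          simp [Gen.support] at hx2
          subst hx2
          rcases (ih x ys).1 hmxs with ⟨hl, hc⟩
          exact ⟨by simpa using Nat.succ_lt_succ hl, List.Chain.cons hx hc⟩
    · rintro ⟨hl, hc⟩
      match xs with
      | [] =>
        exact ⟨none, (sg_support b none).2 (Or.inl rfl), by simp [Gen.support]⟩
      | x :: ys =>
        rcases List.chain_cons.1 hc with ⟨hx, hc⟩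
        refine ⟨some (x, x), (sg_support b _).2 (Or.inr ⟨x, hx, rfl⟩), ?_⟩
        exact ⟨some ys, (ih x ys).2 ⟨by simpa using Nat.lt_of_succ_lt_succ hl, hc⟩,
          by simp [Gen.support]⟩

theorem genSorted_correct (xs : List ℕ) :
    xs ∈ ⟦genSorted⟧ ↔ List.Chain' (· ≤ ·) xs := by
  have hgen : genSorted = listUnfold sg 0 := rfl
  rw [hgen]
  constructor
  · rintro ⟨⟨n, hn⟩, _⟩
    have := (go_some n 0 xs).1 hn
    rcases this with ⟨_, hc⟩
    match xs with
    | [] => exact List.isChain_nil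
    | x :: ys => exact List.chain_cons.1 hc |>.2
  · intro h
    refine ⟨⟨xs.length + 1, (go_some _ 0 xs).2 ⟨Nat.lt_succ_self _, ?_⟩⟩,
      fun a' n ha' => (go_some (n+1) 0 a').2 ?_⟩
    · match xs with
      | [] => exact List.Chain.nil
      | x :: ys => exact List.chain_cons.2 ⟨Nat.zero_le _, h⟩
    · rcases (go_some n 0 a').1 ha' with ⟨hl, hc⟩
      exact ⟨Nat.lt_succ_of_lt hl, hc⟩

end PBT
end
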